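/- Concatenation (stochastic, two nodes): If node i provides the information stochastic service curve ⟨gⁱ, βⁱ⟩, i.e. for all t, x ≥ 0, P( sup_{0≤s≤t} [ (H(Aⁱ) ⊗ [βⁱ]ˣ)(s) − H(Aⁱ*(s)) ] > x ) ≤ gⁱ(x), for i = 1, 2, where A¹* = A² (output of node 1 feeds node 2), then the tandem of the two nodes provides the service curve ⟨g¹ ⊗ g², β¹ ⊗ β²⟩ to the flow: P( sup_{0≤s≤t} [ (H(A¹) ⊗ [β¹ ⊗ β²]ˣ)(s) − H(A²*(s)) ] > x ) ≤ (g¹ ⊗ g²)(x). -/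

import Mathlib

/-!
On every sample path the deviations of the two nodes add up: since
`[β₁ ⊗ β₂]^(a+b) ≤ [β₁]^a ⊗ [β₂]^b`, one gets `A ⊗ [β₁ ⊗ β₂]^(a+b) ≤ (A ⊗ [β₁]^a) ⊗ [β₂]^b`,
and bounding `A ⊗ [β₁]^a` by the output of node 1 plus its deviation, then
`B ⊗ [β₂]^b` by the output of node 2 plus its deviation, bounds the deviation of the tandem
at level `a + b` by the sum of the two deviations at levels `a` and `b`. Hence the tandem
deviation can only exceed `x` if, for every split `x = a + b`, node 1 exceeds `a` or node 2
exceeds `b`; the union bound and an infimum over the splits give `(g₁ ⊗ g₂)(x)`.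
-/

open MeasureTheory Set

/-- The `(min,+)` convolution `(f ⊗ g)(s) = inf_{0 ≤ u ≤ s} (f u + g (s - u))`. -/
noncomputable def minConv (f g : ℝ → ℝ) (s : ℝ) : ℝ :=
  sInf ((fun u => f u + g (s - u)) '' Set.Icc 0 s)

/-- The clipped curve `[β]ˣ(t) = max (β t) x`. -/
def clip (β : ℝ → ℝ) (x : ℝ) : ℝ → ℝ := fun t => max (β t) x

section MinConv

variable {f g h : ℝ → ℝ} {s : ℝ}

lemma minConv_le_add (hf : ∀ u, 0 ≤ f u) (hg : ∀ u, 0 ≤ g u) {u : ℝ} (hu : u ∈ Icc 0 s) :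
    minConv f g s ≤ f u + g (s - u) :=
  csInf_le ⟨0, by rintro _ ⟨v, -, rfl⟩; exact add_nonneg (hf v) (hg _)⟩ ⟨u, hu, rfl⟩

lemma le_minConv {c : ℝ} (hs : 0 ≤ s) (h : ∀ u ∈ Icc 0 s, c ≤ f u + g (s - u)) :
    c ≤ minConv f g s :=
  le_csInf ((nonempty_Icc.2 hs).image _) (by rintro _ ⟨u, hu, rfl⟩; exact h u hu)

lemma minConv_nonneg (hf : ∀ u, 0 ≤ f u) (hg : ∀ u, 0 ≤ g u) : 0 ≤ minConv f g s :=
  Real.sInf_nonneg (by rintro _ ⟨u, -, rfl⟩; exact add_nonneg (hf u) (hg _))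

lemma minConv_le_minConv_add {f' : ℝ → ℝ} {c : ℝ} (hf : ∀ u, 0 ≤ f u) (hg : ∀ u, 0 ≤ g u)
    (hs : 0 ≤ s) (hff' : ∀ u ∈ Icc 0 s, f u ≤ f' u + c) :
    minConv f g s ≤ minConv f' g s + c := by
  suffices minConv f g s - c ≤ minConv f' g s by linarith
  refine le_minConv hs fun u hu => ?_
  linarith [minConv_le_add hf hg hu, hff' u hu]

lemma minConv_le_minConv_minConv {g₁ g₂ : ℝ → ℝ} (hf : ∀ u, 0 ≤ f u) (hh : ∀ u, 0 ≤ h u)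
    (hsplit : ∀ u₁ u₂, 0 ≤ u₁ → 0 ≤ u₂ → h (u₁ + u₂) ≤ g₁ u₁ + g₂ u₂) (hs : 0 ≤ s) :
    minConv f h s ≤ minConv (minConv f g₁) g₂ s := by
  refine le_minConv hs fun w hw => ?_
  suffices minConv f h s - g₂ (s - w) ≤ minConv f g₁ w by linarith
  refine le_minConv hw.1 fun v hv => ?_
  have hsplit' := hsplit (w - v) (s - w) (by linarith [hv.2]) (by linarith [hw.2])
  rw [show w - v + (s - w) = s - v by ring] at hsplit'
  linarith [minConv_le_add hf hh (⟨hv.1, hv.2.trans hw.2⟩ : v ∈ Icc 0 s)]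

end MinConv

lemma clip_nonneg {β : ℝ → ℝ} (hβ : ∀ u, 0 ≤ β u) (x u : ℝ) : 0 ≤ clip β x u :=
  (hβ u).trans (le_max_left _ _)

lemma Monotone.clip {β : ℝ → ℝ} (hβ : Monotone β) (x : ℝ) : Monotone (clip β x) :=
  fun _ _ huv => max_le_max (hβ huv) le_rfl

lemma clip_minConv_add_le {β₁ β₂ : ℝ → ℝ} (hβ₁ : ∀ u, 0 ≤ β₁ u) (hβ₂ : ∀ u, 0 ≤ β₂ u)
    (a b : ℝ) {u₁ u₂ : ℝ} (hu₁ : 0 ≤ u₁) (hu₂ : 0 ≤ u₂) :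
    clip (minConv β₁ β₂) (a + b) (u₁ + u₂) ≤ clip β₁ a u₁ + clip β₂ b u₂ := by
  have hconv : minConv β₁ β₂ (u₁ + u₂) ≤ β₁ u₁ + β₂ u₂ := by
    simpa using minConv_le_add hβ₁ hβ₂ (⟨hu₁, by linarith⟩ : u₁ ∈ Icc 0 (u₁ + u₂))
  exact max_le (hconv.trans (add_le_add (le_max_left _ _) (le_max_left _ _)))
    (add_le_add (le_max_right _ _) (le_max_right _ _))

noncomputable def serviceDeviation (A D β : ℝ → ℝ) (t : ℝ) : ℝ :=
  sSup ((fun s => minConv A β s - D s) '' Icc 0 t)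

section ServiceDeviation

variable {A D β : ℝ → ℝ} {t : ℝ}

lemma bddAbove_image_minConv_sub (hA : ∀ u, 0 ≤ A u) (hD : ∀ u, 0 ≤ D u)
    (hβ : Monotone β) (hβn : ∀ u, 0 ≤ β u) :
    BddAbove ((fun s => minConv A β s - D s) '' Icc 0 t) := by
  refine ⟨A 0 + β t, ?_⟩
  rintro _ ⟨s, hs, rfl⟩
  have h0 := minConv_le_add hA hβn (⟨le_rfl, hs.1⟩ : (0 : ℝ) ∈ Icc 0 s)
  rw [sub_zero] at h0
  linarith [hβ hs.2, hD s]

lemma minConv_le_add_serviceDeviation (hA : ∀ u, 0 ≤ A u) (hD : ∀ u, 0 ≤ D u)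
    (hβ : Monotone β) (hβn : ∀ u, 0 ≤ β u) {s : ℝ} (hs : s ∈ Icc 0 t) :
    minConv A β s ≤ D s + serviceDeviation A D β t := by
  have := le_csSup (bddAbove_image_minConv_sub hA hD hβ hβn) ⟨s, hs, rfl⟩
  simp only [serviceDeviation] at this ⊢
  linarith

lemma serviceDeviation_le {c : ℝ} (ht : 0 ≤ t)
    (h : ∀ s ∈ Icc 0 t, minConv A β s - D s ≤ c) : serviceDeviation A D β t ≤ c :=
  csSup_le ((nonempty_Icc.2 ht).image _) (by rintro _ ⟨s, hs, rfl⟩; exact h s hs)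

end ServiceDeviation

theorem serviceDeviation_concat_le {A B C β₁ β₂ : ℝ → ℝ} (hA : ∀ u, 0 ≤ A u)
    (hB : ∀ u, 0 ≤ B u) (hC : ∀ u, 0 ≤ C u) (hβ₁ : Monotone β₁) (hβ₂ : Monotone β₂)
    (hβ₁n : ∀ u, 0 ≤ β₁ u) (hβ₂n : ∀ u, 0 ≤ β₂ u) (a b : ℝ) {t : ℝ} (ht : 0 ≤ t) :
    serviceDeviation A C (clip (minConv β₁ β₂) (a + b)) t ≤
      serviceDeviation A B (clip β₁ a) t + serviceDeviation B C (clip β₂ b) t := by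
  refine serviceDeviation_le ht fun s hs => ?_
  have h_assoc : minConv A (clip (minConv β₁ β₂) (a + b)) s ≤
      minConv (minConv A (clip β₁ a)) (clip β₂ b) s :=
    minConv_le_minConv_minConv hA (clip_nonneg (fun _ => minConv_nonneg hβ₁n hβ₂n) _)
      (fun _ _ hu₁ hu₂ => clip_minConv_add_le hβ₁n hβ₂n a b hu₁ hu₂) hs.1
  have h_node₁ : minConv (minConv A (clip β₁ a)) (clip β₂ b) s ≤
      minConv B (clip β₂ b) s + serviceDeviation A B (clip β₁ a) t :=
    minConv_le_minConv_add (fun _ => minConv_nonneg hA (clip_nonneg hβ₁n _))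
      (clip_nonneg hβ₂n _) hs.1 fun w hw =>
        minConv_le_add_serviceDeviation hA hB (hβ₁.clip a) (clip_nonneg hβ₁n a)
          ⟨hw.1, hw.2.trans hs.2⟩
  have h_node₂ := minConv_le_add_serviceDeviation hB hC (hβ₂.clip b) (clip_nonneg hβ₂n b) hs
  linarith

lemma le_ofReal_minConv {m : ENNReal} {f g : ℝ → ℝ} {x : ℝ} (hx : 0 ≤ x)
    (hf : ∀ u, 0 ≤ u → 0 ≤ f u) (hg : ∀ u, 0 ≤ u → 0 ≤ g u)
    (hm : ∀ u ∈ Icc 0 x, m ≤ ENNReal.ofReal (f u + g (x - u))) :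
    m ≤ ENNReal.ofReal (minConv f g x) := by
  have hm_top : m ≠ ⊤ := ne_top_of_le_ne_top ENNReal.ofReal_ne_top (hm 0 ⟨le_rfl, hx⟩)
  have hsum_nonneg : ∀ u ∈ Icc 0 x, 0 ≤ f u + g (x - u) :=
    fun u hu => add_nonneg (hf u hu.1) (hg _ (by linarith [hu.2]))
  rw [ENNReal.le_ofReal_iff_toReal_le hm_top (le_minConv hx hsum_nonneg)]
  exact le_minConv hx fun u hu =>
    ENNReal.toReal_le_of_le_ofReal (hsum_nonneg u hu) (hm u hu)

lemma measure_le_ofReal_minConv {Ω : Type*} [MeasurableSpace Ω] (μ : Measure Ω)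
    {E : Set Ω} {S T : ℝ → Set Ω} {f g : ℝ → ℝ}
    (hf : ∀ u, 0 ≤ u → 0 ≤ f u) (hg : ∀ u, 0 ≤ u → 0 ≤ g u)
    (hS : ∀ a, 0 ≤ a → μ (S a) ≤ ENNReal.ofReal (f a))
    (hT : ∀ b, 0 ≤ b → μ (T b) ≤ ENNReal.ofReal (g b)) {x : ℝ} (hx : 0 ≤ x)
    (hE : ∀ a ∈ Icc 0 x, E ⊆ S a ∪ T (x - a)) :
    μ E ≤ ENNReal.ofReal (minConv f g x) := by
  refine le_ofReal_minConv hx hf hg fun a ha => ?_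
  have hxa : 0 ≤ x - a := by linarith [ha.2]
  calc μ E ≤ μ (S a ∪ T (x - a)) := measure_mono (hE a ha)
    _ ≤ μ (S a) + μ (T (x - a)) := measure_union_le _ _
    _ ≤ ENNReal.ofReal (f a) + ENNReal.ofReal (g (x - a)) := add_le_add (hS a ha.1) (hT _ hxa)
    _ = ENNReal.ofReal (f a + g (x - a)) := (ENNReal.ofReal_add (hf a ha.1) (hg _ hxa)).symm

/-- `HA1 ω` is the information process of the input of node 1, `HA1s ω` of its output
(which is the input of node 2), and `HA2s ω` of the final output. -/
theorem stmt9_general {Ω : Type*} [MeasurableSpace Ω] (μ : Measure Ω)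
    (HA1 HA1s HA2s : Ω → ℝ → ℝ) (β₁ β₂ g₁ g₂ : ℝ → ℝ)
    (hHA1n : ∀ ω s, 0 ≤ HA1 ω s) (hHA1sn : ∀ ω s, 0 ≤ HA1s ω s)
    (hHA2sn : ∀ ω s, 0 ≤ HA2s ω s)
    (hβ₁ : Monotone β₁) (hβ₂ : Monotone β₂) (hβ₁n : ∀ s, 0 ≤ β₁ s) (hβ₂n : ∀ s, 0 ≤ β₂ s)
    (hg₁0 : ∀ x, 0 ≤ x → 0 ≤ g₁ x)
    (hg₂0 : ∀ x, 0 ≤ x → 0 ≤ g₂ x)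
    (hS₁ : ∀ t x : ℝ, 0 ≤ t → 0 ≤ x →
      μ {ω | x < sSup ((fun s => minConv (HA1 ω) (clip β₁ x) s - HA1s ω s) '' Set.Icc 0 t)}
        ≤ ENNReal.ofReal (g₁ x))
    (hS₂ : ∀ t x : ℝ, 0 ≤ t → 0 ≤ x →
      μ {ω | x < sSup ((fun s => minConv (HA1s ω) (clip β₂ x) s - HA2s ω s) '' Set.Icc 0 t)}
        ≤ ENNReal.ofReal (g₂ x)) :
    ∀ t x : ℝ, 0 ≤ t → 0 ≤ x →
      μ {ω | x < sSup ((fun s =>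
          minConv (HA1 ω) (clip (minConv β₁ β₂) x) s - HA2s ω s) '' Set.Icc 0 t)}
        ≤ ENNReal.ofReal (minConv g₁ g₂ x) := by
  intro t x ht hx
  refine measure_le_ofReal_minConv μ hg₁0 hg₂0 (fun a => hS₁ t a ht) (fun b => hS₂ t b ht) hx
    fun a _ ω hω => ?_
  have h_path := serviceDeviation_concat_le (hHA1n ω) (hHA1sn ω) (hHA2sn ω) hβ₁ hβ₂ hβ₁n hβ₂n
    a (x - a) ht
  rw [add_sub_cancel] at h_path
  unfold serviceDeviation at h_path
  by_contra h_none
  simp only [mem_union, mem_ofPred_eq, not_or, not_lt] at h_none hω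
  linarith [h_none.1, h_none.2]

/-- Concatenation (stochastic, two nodes): `HA1 ω` is the information process of the input
of node 1, `HA1s ω` of its output (which is the input of node 2), and `HA2s ω` of the final
output. If node `i` provides the service curve `⟨gᵢ, βᵢ⟩`, the tandem provides
`⟨g₁ ⊗ g₂, β₁ ⊗ β₂⟩`. -/
theorem stmt9 {Ω : Type*} [MeasurableSpace Ω] (μ : Measure Ω) [IsProbabilityMeasure μ]
    (HA1 HA1s HA2s : Ω → ℝ → ℝ) (β₁ β₂ g₁ g₂ : ℝ → ℝ)
    (hHA1 : ∀ ω, Monotone (HA1 ω)) (hHA1s : ∀ ω, Monotone (HA1s ω))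
    (hHA2s : ∀ ω, Monotone (HA2s ω))
    (hHA1n : ∀ ω s, 0 ≤ HA1 ω s) (hHA1sn : ∀ ω s, 0 ≤ HA1s ω s)
    (hHA2sn : ∀ ω s, 0 ≤ HA2s ω s)
    (hHA10 : ∀ ω, HA1 ω 0 = 0) (hHA1s0 : ∀ ω, HA1s ω 0 = 0) (hHA2s0 : ∀ ω, HA2s ω 0 = 0)
    (hβ₁ : Monotone β₁) (hβ₂ : Monotone β₂) (hβ₁n : ∀ s, 0 ≤ β₁ s) (hβ₂n : ∀ s, 0 ≤ β₂ s)
    (hg₁0 : ∀ x, 0 ≤ x → 0 ≤ g₁ x) (hg₁dec : ∀ x y, 0 ≤ x → x ≤ y → g₁ y ≤ g₁ x)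
    (hg₂0 : ∀ x, 0 ≤ x → 0 ≤ g₂ x) (hg₂dec : ∀ x y, 0 ≤ x → x ≤ y → g₂ y ≤ g₂ x)
    (hS₁ : ∀ t x : ℝ, 0 ≤ t → 0 ≤ x →
      μ {ω | x < sSup ((fun s => minConv (HA1 ω) (clip β₁ x) s - HA1s ω s) '' Set.Icc 0 t)}
        ≤ ENNReal.ofReal (g₁ x))
    (hS₂ : ∀ t x : ℝ, 0 ≤ t → 0 ≤ x →
      μ {ω | x < sSup ((fun s => minConv (HA1s ω) (clip β₂ x) s - HA2s ω s) '' Set.Icc 0 t)}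
        ≤ ENNReal.ofReal (g₂ x)) :
    ∀ t x : ℝ, 0 ≤ t → 0 ≤ x →
      μ {ω | x < sSup ((fun s =>
          minConv (HA1 ω) (clip (minConv β₁ β₂) x) s - HA2s ω s) '' Set.Icc 0 t)}
        ≤ ENNReal.ofReal (minConv g₁ g₂ x) :=
  stmt9_general μ HA1 HA1s HA2s β₁ β₂ g₁ g₂ hHA1n hHA1sn hHA2sn hβ₁ hβ₂ hβ₁n hβ₂n hg₁0 hg₂0 hS₁ hS₂
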